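/- arXiv:1812.03644 — 5 statements merged into one kernel-verified Lean document; each statement's English description precedes it below -/
import Mathlib

section
/- For data length n ≥ 3 and the 1-step binary segmentation model selecting changepoint b₁ ∈ {1,...,n-1} with direction d₁ ∈ {-1,1}, the set of vectors y ∈ ℝⁿ for which the maximizing absolute CUSUM statistic occurs at b₁ with sign d₁ is exactly the set {y : Γy ≥ 0} for an explicit matrix Γ with 2(n-2) rows, where each row is d₁·g_{(1,b₁,n)} - g_{(1,b,n)} or d₁·g_{(1,b₁,n)} + g_{(1,b,n)} for b ≠ b₁. -/
/-- Sum of the entries of `y` over the (1-indexed) data positions `a, ..., b`. -/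
noncomputable def segSum (n : ℕ) (y : Fin n → ℝ) (a b : ℕ) : ℝ :=
  ∑ i ∈ Finset.Icc a b, if h : i - 1 < n then y ⟨i - 1, h⟩ else 0

/-- Sample mean of `y` over the (1-indexed) data positions `a, ..., b`. -/
noncomputable def segMean (n : ℕ) (y : Fin n → ℝ) (a b : ℕ) : ℝ :=
  segSum n y a b / ((b : ℝ) - a + 1)

/-- CUSUM statistic `g_{(s,b,e)}ᵀ y`: the weighted difference between the sample mean of
`y_{(b+1):e}` and the sample mean of `y_{s:b}`. -/
noncomputable def cusum (n : ℕ) (s b e : ℕ) (y : Fin n → ℝ) : ℝ :=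
  Real.sqrt (1 / (1 / ((e : ℝ) - b) + 1 / ((b : ℝ) + 1 - s))) *
    (segMean n y (b + 1) e - segMean n y s b)

/-!
Each CUSUM statistic `g_{(1,b,n)}ᵀ y` is linear in `y`, so the selection event is the intersection
of the half-spaces `d₁ g_{(1,b₁,n)}ᵀ y ∓ g_{(1,b,n)}ᵀ y ≥ 0` over the `n - 2` indices `b ≠ b₁`;
stacking these `2 (n - 2)` linear functionals as rows gives `Γ`.
-/

section Linearity

variable {n a b s e : ℕ} (y z : Fin n → ℝ)

theorem segSum_add : segSum n (y + z) a b = segSum n y a b + segSum n z a b := by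
  simp only [segSum, ← Finset.sum_add_distrib]
  refine Finset.sum_congr rfl fun i _ => ?_
  split_ifs <;> simp

theorem segSum_smul (c : ℝ) : segSum n (c • y) a b = c * segSum n y a b := by
  simp only [segSum, Finset.mul_sum]
  refine Finset.sum_congr rfl fun i _ => ?_
  split_ifs <;> simp

theorem cusum_add : cusum n s b e (y + z) = cusum n s b e y + cusum n s b e z := by
  simp only [cusum, segMean, segSum_add]
  ring

theorem cusum_smul (c : ℝ) : cusum n s b e (c • y) = c * cusum n s b e y := by
  simp only [cusum, segMean, segSum_smul]
  ring

end Linearity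

noncomputable def cusumLinearMap (n s b e : ℕ) : (Fin n → ℝ) →ₗ[ℝ] ℝ where
  toFun := cusum n s b e
  map_add' := cusum_add
  map_smul' c y := cusum_smul y c

@[simp]
theorem cusumLinearMap_apply (n s b e : ℕ) (y : Fin n → ℝ) :
    cusumLinearMap n s b e y = cusum n s b e y :=
  rfl

theorem exists_matrix_abs_le_iff_mulVec_nonneg {ι κ R : Type*} [Fintype κ] [DecidableEq κ]
    [CommRing R] [LinearOrder R] [IsStrictOrderedRing R]
    {m : ℕ} (B : Finset ι) (hB : B.card = m)
    (f : ι → (κ → R) →ₗ[R] R) (g : (κ → R) →ₗ[R] R) :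
    ∃ Γ : Matrix (Fin (2 * m)) κ R,
      (∀ y, (∀ b ∈ B, f b y ≤ g y ∧ -f b y ≤ g y) ↔ ∀ i, 0 ≤ Γ.mulVec y i) ∧
      ∀ i, ∃ b ∈ B, (∀ y, Γ.mulVec y i = g y - f b y) ∨ (∀ y, Γ.mulVec y i = g y + f b y) := by
  let bOf : Fin m → B := (Finset.equivFinOfCardEq hB).symm
  let row (i : Fin 2 × Fin m) : (κ → R) →ₗ[R] R := g + ![-1, 1] i.1 • f (bOf i.2)
  refine ⟨LinearMap.toMatrix' (LinearMap.pi fun i => row (finProdFinEquiv.symm i)), ?_, ?_⟩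
  · intro y
    simp only [LinearMap.toMatrix'_mulVec, LinearMap.pi_apply]
    rw [(Finset.forall_coe B (fun b => f b y ≤ g y ∧ -f b y ≤ g y)).symm,
      (Finset.equivFinOfCardEq hB).forall_congr_left, finProdFinEquiv.symm.forall_congr_left,
      Prod.forall, Fin.forall_fin_two, ← forall_and]
    simp [row, bOf, neg_le_iff_add_nonneg]
  · intro i
    obtain ⟨⟨σ, k⟩, rfl⟩ := finProdFinEquiv.surjective i
    refine ⟨bOf k, (bOf k).2, ?_⟩
    simp only [LinearMap.toMatrix'_mulVec, LinearMap.pi_apply, Equiv.symm_apply_apply, row]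
    fin_cases σ
    · exact Or.inl fun y => by simp [sub_eq_add_neg]
    · exact Or.inr fun y => by simp

theorem one_step_bs_polyhedral_general (n : ℕ)
    (b₁ : ℕ) (hb₁ : b₁ ∈ Finset.Icc 1 (n - 1)) (d₁ : ℝ) :
    ∃ Γ : Matrix (Fin (2 * (n - 2))) (Fin n) ℝ,
      (∀ y : Fin n → ℝ,
        (∀ b ∈ Finset.Icc 1 (n - 1), b ≠ b₁ →
            cusum n 1 b n y ≤ d₁ * cusum n 1 b₁ n y ∧
            - cusum n 1 b n y ≤ d₁ * cusum n 1 b₁ n y)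
          ↔ (∀ i, 0 ≤ Γ.mulVec y i)) ∧
      (∀ i : Fin (2 * (n - 2)), ∃ b ∈ Finset.Icc 1 (n - 1), b ≠ b₁ ∧
        ((∀ y, Γ.mulVec y i = d₁ * cusum n 1 b₁ n y - cusum n 1 b n y) ∨
         (∀ y, Γ.mulVec y i = d₁ * cusum n 1 b₁ n y + cusum n 1 b n y))) := by
  have hcard : ((Finset.Icc 1 (n - 1)).erase b₁).card = n - 2 := by
    rw [Finset.card_erase_of_mem hb₁, Nat.card_Icc]
    omega
  obtain ⟨Γ, hΓ, hrows⟩ := exists_matrix_abs_le_iff_mulVec_nonneg _ hcard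
    (fun b => cusumLinearMap n 1 b n) (d₁ • cusumLinearMap n 1 b₁ n)
  refine ⟨Γ, fun y => ?_, fun i => ?_⟩
  · simpa [and_imp, Finset.mem_erase, and_comm (a := _ ≠ b₁)] using hΓ y
  · obtain ⟨b, hb, hrow⟩ := hrows i
    rw [Finset.mem_erase] at hb
    exact ⟨b, hb.2, hb.1, by simpa using hrow⟩

/-- For `n ≥ 3`, a changepoint `b₁ ∈ {1,...,n-1}` and direction `d₁ ∈ {-1,1}`,
the 1-step binary segmentation selection event (the maximizing absolute CUSUM statistic
occurs at `b₁` with sign `d₁`, i.e. `d₁ g_{(1,b₁,n)}ᵀ y ≥ ± g_{(1,b,n)}ᵀ y` for all `b ≠ b₁`)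
equals `{y : Γy ≥ 0}` for an explicit matrix `Γ` with `2(n-2)` rows, each row being
`d₁·g_{(1,b₁,n)} − g_{(1,b,n)}` or `d₁·g_{(1,b₁,n)} + g_{(1,b,n)}` for some `b ≠ b₁`. -/
theorem one_step_bs_polyhedral (n : ℕ) (hn : 3 ≤ n)
    (b₁ : ℕ) (hb₁ : b₁ ∈ Finset.Icc 1 (n - 1)) (d₁ : ℝ) (hd₁ : d₁ = 1 ∨ d₁ = -1) :
    ∃ Γ : Matrix (Fin (2 * (n - 2))) (Fin n) ℝ,
      (∀ y : Fin n → ℝ,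
        (∀ b ∈ Finset.Icc 1 (n - 1), b ≠ b₁ →
            cusum n 1 b n y ≤ d₁ * cusum n 1 b₁ n y ∧
            - cusum n 1 b n y ≤ d₁ * cusum n 1 b₁ n y)
          ↔ (∀ i, 0 ≤ Γ.mulVec y i)) ∧
      (∀ i : Fin (2 * (n - 2)), ∃ b ∈ Finset.Icc 1 (n - 1), b ≠ b₁ ∧
        ((∀ y, Γ.mulVec y i = d₁ * cusum n 1 b₁ n y - cusum n 1 b n y) ∨
         (∀ y, Γ.mulVec y i = d₁ * cusum n 1 b₁ n y + cusum n 1 b n y))) :=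
  one_step_bs_polyhedral_general n b₁ hb₁ d₁
end

section
/- For the k-step wild binary segmentation model with B random intervals each of length p, the selection event {y : M^{WBS}_{1:k}(y,w) = {b_{1:k}, d_{1:k}, j_{1:k}}} is a polyhedral cone {y : Γy ≥ 0}, and the number of rows of Γ is at most 2∑_{ℓ=1}^{k}((B−ℓ)(p−1) + (p−2)). -/
/-- Interval index `j'` is still usable at step `ℓ` of wild binary segmentation: the interval
`w j'` does not contain any of the previously found changepoints `b 0, ..., b (ℓ-1)`. -/
def wbsActive {B : ℕ} (w : Fin B → ℕ × ℕ) (b : ℕ → ℕ) (ℓ : ℕ) (j' : Fin B) : Prop :=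
  ∀ i < ℓ, ¬((w j').1 ≤ b i ∧ b i ≤ (w j').2)

/-- The `k`-step wild binary segmentation selection event for the model
`{b_{1:k}, d_{1:k}, j_{1:k}}` with interval set `w`: at each step `ℓ`, the maximizing
interval is `j ℓ`, the changepoint is `b ℓ`, and its signed CUSUM statistic dominates, in
absolute value, every other candidate split of every active interval. -/
def wbsEvent (n : ℕ) {B : ℕ} (w : Fin B → ℕ × ℕ) (k : ℕ)
    (b : ℕ → ℕ) (d : ℕ → ℝ) (j : ℕ → Fin B) (y : Fin n → ℝ) : Prop :=
  ∀ ℓ < k, wbsActive w b ℓ (j ℓ) ∧ (w (j ℓ)).1 ≤ b ℓ ∧ b ℓ < (w (j ℓ)).2 ∧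
    ∀ j' : Fin B, wbsActive w b ℓ j' → ∀ b', (w j').1 ≤ b' → b' < (w j').2 →
      (j', b') ≠ (j ℓ, b ℓ) →
        cusum n (w j').1 b' (w j').2 y ≤ d ℓ * cusum n (w (j ℓ)).1 (b ℓ) (w (j ℓ)).2 y ∧
        - cusum n (w j').1 b' (w j').2 y ≤ d ℓ * cusum n (w (j ℓ)).1 (b ℓ) (w (j ℓ)).2 y


open Finset

theorem exists_matrix_forall_nonneg_iff {R ι : Type*} [CommSemiring R] [LE R] {n : ℕ}
    (T : Finset ι) (F : ι → (Fin n → R) →ₗ[R] R) :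
    ∃ Γ : Matrix (Fin #T) (Fin n) R,
      ∀ y, (∀ t ∈ T, 0 ≤ F t y) ↔ ∀ i, 0 ≤ Γ.mulVec y i := by
  refine ⟨LinearMap.toMatrix' (LinearMap.pi fun i => F (T.equivFin.symm i)), fun y => ?_⟩
  simp only [LinearMap.toMatrix'_mulVec, LinearMap.pi_apply]
  exact ⟨fun h i => h _ (T.equivFin.symm i).2,
    fun h t ht => by simpa using h (T.equivFin ⟨t, ht⟩)⟩

noncomputable def segSumLinear (n a c : ℕ) : (Fin n → ℝ) →ₗ[ℝ] ℝ where
  toFun y := segSum n y a c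
  map_add' y z := by
    simp only [segSum, ← sum_add_distrib]
    exact sum_congr rfl fun i _ => by split_ifs <;> simp
  map_smul' r y := by
    simp only [segSum, RingHom.id_apply, smul_eq_mul, mul_sum]
    exact sum_congr rfl fun i _ => by split_ifs <;> simp

noncomputable def cusumLinear (n s b e : ℕ) : (Fin n → ℝ) →ₗ[ℝ] ℝ :=
  √(1 / (1 / ((e : ℝ) - b) + 1 / ((b : ℝ) + 1 - s))) •
    ((((e : ℝ) - ((b + 1 : ℕ) : ℝ) + 1)⁻¹) • segSumLinear n (b + 1) e -
      (((b : ℝ) - s + 1)⁻¹) • segSumLinear n s b)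

theorem cusumLinear_apply (n s b e : ℕ) (y : Fin n → ℝ) :
    cusumLinear n s b e y = cusum n s b e y := by
  simp only [cusumLinear, cusum, segMean, LinearMap.smul_apply, LinearMap.sub_apply,
    smul_eq_mul, segSumLinear, LinearMap.coe_mk, AddHom.coe_mk, div_eq_inv_mul]

section WBS

variable {B : ℕ} (w : Fin B → ℕ × ℕ) (b : ℕ → ℕ) (j : ℕ → Fin B)

def WbsStepAdmissible (ℓ : ℕ) : Prop :=
  wbsActive w b ℓ (j ℓ) ∧ (w (j ℓ)).1 ≤ b ℓ ∧ b ℓ < (w (j ℓ)).2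

open Classical in
noncomputable def wbsActiveSet (ℓ : ℕ) : Finset (Fin B) :=
  univ.filter (wbsActive w b ℓ)

noncomputable def wbsCandidates (ℓ : ℕ) : Finset (Fin B × ℕ) :=
  ((wbsActiveSet w b ℓ).biUnion fun j' => {j'} ×ˢ Ico (w j').1 (w j').2).erase (j ℓ, b ℓ)

/-- Row `⟨ℓ, q, s⟩` of `Γ` encodes `s • cusum_q ≤ d ℓ • cusum_{(j ℓ, b ℓ)}` with `s = ±1`. -/
noncomputable def wbsRows (k : ℕ) : Finset (Σ _ : ℕ, (Fin B × ℕ) × ℝ) :=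
  (range k).sigma fun ℓ => wbsCandidates w b j ℓ ×ˢ {1, -1}

noncomputable def wbsRowFunctional (n : ℕ) (d : ℕ → ℝ) :
    (Σ _ : ℕ, (Fin B × ℕ) × ℝ) → (Fin n → ℝ) →ₗ[ℝ] ℝ
  | ⟨ℓ, (j', b'), s⟩ =>
    d ℓ • cusumLinear n (w (j ℓ)).1 (b ℓ) (w (j ℓ)).2 - s • cusumLinear n (w j').1 b' (w j').2

variable {w b j}

theorem mem_wbsActiveSet {ℓ : ℕ} {j' : Fin B} : j' ∈ wbsActiveSet w b ℓ ↔ wbsActive w b ℓ j' := by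
  simp [wbsActiveSet]

theorem mem_wbsCandidates {ℓ b' : ℕ} {j' : Fin B} :
    (j', b') ∈ wbsCandidates w b j ℓ ↔
      wbsActive w b ℓ j' ∧ (w j').1 ≤ b' ∧ b' < (w j').2 ∧ (j', b') ≠ (j ℓ, b ℓ) := by
  simp only [wbsCandidates, mem_erase, mem_biUnion, mem_product, mem_singleton, mem_Ico,
    mem_wbsActiveSet]
  grind

theorem injOn_range_of_wbsStepAdmissible {ℓ : ℕ} (h : ∀ i < ℓ, WbsStepAdmissible w b j i) :
    Set.InjOn j (range ℓ) := by
  have hne : ∀ i i', i' < i → i < ℓ → j i ≠ j i' := fun i i' hi' hi heq =>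
    (h i hi).1 i' hi' (heq ▸ ⟨(h i' (hi'.trans hi)).2.1, (h i' (hi'.trans hi)).2.2.le⟩)
  intro a ha a' ha' heq
  rw [coe_range, Set.mem_Iio] at ha ha'
  rcases lt_trichotomy a a' with hlt | rfl | hgt
  · exact absurd heq.symm (hne _ _ hlt ha')
  · rfl
  · exact absurd heq (hne _ _ hgt ha)

theorem card_wbsActiveSet_add_le {ℓ : ℕ} (h : ∀ i < ℓ, WbsStepAdmissible w b j i) :
    #(wbsActiveSet w b ℓ) + ℓ ≤ B := by
  have hdisj : Disjoint (wbsActiveSet w b ℓ) ((range ℓ).image j) := by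
    refine disjoint_left.2 fun j' hact hj' => ?_
    obtain ⟨i, hi, rfl⟩ := mem_image.1 hj'
    have hi := mem_range.1 hi
    exact mem_wbsActiveSet.1 hact i hi ⟨(h i hi).2.1, (h i hi).2.2.le⟩
  calc #(wbsActiveSet w b ℓ) + ℓ = #(wbsActiveSet w b ℓ ∪ (range ℓ).image j) := by
        rw [card_union_of_disjoint hdisj,
          card_image_of_injOn (injOn_range_of_wbsStepAdmissible h), card_range]
    _ ≤ B := by simpa using card_le_univ (wbsActiveSet w b ℓ ∪ (range ℓ).image j)

theorem card_wbsCandidates_le {p ℓ : ℕ} (hlen : ∀ j', (w j').2 - (w j').1 + 1 = p)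
    (h : ∀ i ≤ ℓ, WbsStepAdmissible w b j i) :
    #(wbsCandidates w b j ℓ) ≤ (B - (ℓ + 1)) * (p - 1) + (p - 2) := by
  obtain ⟨hact, hs, he⟩ := h ℓ le_rfl
  have hp : 2 ≤ p := by have := hlen (j ℓ); omega
  have hIco : ∀ j', #(Ico (w j').1 (w j').2) = p - 1 := fun j' => by
    rw [Nat.card_Ico]; have := hlen j'; omega
  have hmem : (j ℓ, b ℓ) ∈ (wbsActiveSet w b ℓ).biUnion fun j' => {j'} ×ˢ Ico (w j').1 (w j').2 :=
    mem_biUnion.2 ⟨j ℓ, mem_wbsActiveSet.2 hact, by simp [hs, he]⟩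
  have hunion := card_biUnion_le (s := wbsActiveSet w b ℓ)
    (t := fun j' => {j'} ×ˢ Ico (w j').1 (w j').2)
  simp only [card_product, card_singleton, one_mul, hIco, sum_const, smul_eq_mul] at hunion
  obtain ⟨a, ha⟩ : ∃ a, #(wbsActiveSet w b ℓ) = a + 1 :=
    Nat.exists_eq_add_one.2 (card_pos.2 ⟨_, mem_wbsActiveSet.2 hact⟩)
  have hA := card_wbsActiveSet_add_le (w := w) (b := b) (j := j) fun i hi => h i hi.le
  have hmul : a * (p - 1) ≤ (B - (ℓ + 1)) * (p - 1) := Nat.mul_le_mul_right _ (by omega)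
  rw [ha, add_mul, one_mul] at hunion
  rw [wbsCandidates, card_erase_of_mem hmem]
  omega

theorem card_wbsRows_le {p k : ℕ} (hlen : ∀ j', (w j').2 - (w j').1 + 1 = p)
    (h : ∀ ℓ < k, WbsStepAdmissible w b j ℓ) :
    #(wbsRows w b j k) ≤ 2 * ∑ ℓ ∈ range k, ((B - (ℓ + 1)) * (p - 1) + (p - 2)) := by
  rw [wbsRows, card_sigma, mul_sum]
  refine sum_le_sum fun ℓ hℓ => ?_
  rw [card_product, card_pair (by norm_num), mul_comm]
  exact Nat.mul_le_mul_left _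
    (card_wbsCandidates_le hlen fun i hi => h i (hi.trans_lt (mem_range.1 hℓ)))

theorem wbsEvent_iff_forall_wbsRows {n k : ℕ} {d : ℕ → ℝ}
    (h : ∀ ℓ < k, WbsStepAdmissible w b j ℓ) (y : Fin n → ℝ) :
    wbsEvent n w k b d j y ↔ ∀ t ∈ wbsRows w b j k, 0 ≤ wbsRowFunctional w b j n d t y := by
  simp only [wbsEvent, wbsRows, mem_sigma, mem_range, mem_product, mem_insert, mem_singleton,
    Sigma.forall, Prod.forall, mem_wbsCandidates, wbsRowFunctional, LinearMap.sub_apply,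
    LinearMap.smul_apply, smul_eq_mul, cusumLinear_apply]
  constructor
  · rintro hE ℓ j' b' s ⟨hℓ, ⟨hact, h1, h2, hne⟩, rfl | rfl⟩ <;>
      have := (hE ℓ hℓ).2.2.2 j' hact b' h1 h2 hne <;> linarith
  · refine fun hR ℓ hℓ => ⟨(h ℓ hℓ).1, (h ℓ hℓ).2.1, (h ℓ hℓ).2.2, fun j' hact b' h1 h2 hne => ?_⟩
    have hpos := hR ℓ j' b' 1 ⟨hℓ, ⟨hact, h1, h2, hne⟩, .inl rfl⟩
    have hneg := hR ℓ j' b' (-1) ⟨hℓ, ⟨hact, h1, h2, hne⟩, .inr rfl⟩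
    constructor <;> linarith

end WBS

theorem k_step_wbs_polyhedral_general (n B k p : ℕ)
    (w : Fin B → ℕ × ℕ)
    (hw : ∀ j' : Fin B, 1 ≤ (w j').1 ∧ (w j').2 ≤ n ∧ (w j').2 - (w j').1 + 1 = p)
    (b : ℕ → ℕ) (d : ℕ → ℝ) (j : ℕ → Fin B)
    (hb : ∀ ℓ < k, wbsActive w b ℓ (j ℓ) ∧ (w (j ℓ)).1 ≤ b ℓ ∧ b ℓ < (w (j ℓ)).2) :
    ∃ (m : ℕ) (Γ : Matrix (Fin m) (Fin n) ℝ),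
      m ≤ 2 * ∑ ℓ ∈ Finset.range k, ((B - (ℓ + 1)) * (p - 1) + (p - 2)) ∧
      ∀ y : Fin n → ℝ, wbsEvent n w k b d j y ↔ ∀ i, 0 ≤ Γ.mulVec y i := by
  obtain ⟨Γ, hΓ⟩ := exists_matrix_forall_nonneg_iff (wbsRows w b j k) (wbsRowFunctional w b j n d)
  exact ⟨_, Γ, card_wbsRows_le (fun j' => (hw j').2.2) hb,
    fun y => (wbsEvent_iff_forall_wbsRows hb y).trans (hΓ y)⟩

/-- For `k`-step wild binary segmentation with `B` intervals each of length `p`,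
the selection event is a polyhedral cone `{y : Γy ≥ 0}`, with the number of rows of `Γ`
at most `2 ∑_{ℓ=1}^{k} ((B − ℓ)(p − 1) + (p − 2))`. -/
theorem k_step_wbs_polyhedral (n B k p : ℕ) (hn : 3 ≤ n) (hp : 2 ≤ p)
    (w : Fin B → ℕ × ℕ)
    (hw : ∀ j' : Fin B, 1 ≤ (w j').1 ∧ (w j').2 ≤ n ∧ (w j').2 - (w j').1 + 1 = p)
    (b : ℕ → ℕ) (d : ℕ → ℝ) (j : ℕ → Fin B)
    (hd : ∀ ℓ < k, d ℓ = 1 ∨ d ℓ = -1)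
    (hb : ∀ ℓ < k, wbsActive w b ℓ (j ℓ) ∧ (w (j ℓ)).1 ≤ b ℓ ∧ b ℓ < (w (j ℓ)).2) :
    ∃ (m : ℕ) (Γ : Matrix (Fin m) (Fin n) ℝ),
      m ≤ 2 * ∑ ℓ ∈ Finset.range k, ((B - (ℓ + 1)) * (p - 1) + (p - 2)) ∧
      ∀ y : Fin n → ℝ, wbsEvent n w k b d j y ↔ ∀ i, 0 ≤ Γ.mulVec y i :=
  k_step_wbs_polyhedral_general n B k p w hw b d j hb
end

section
/- Let Y ~ N(θ, σ²Iₙ), let v ∈ ℝⁿ be nonzero, and let Γ ∈ ℝ^{m×n} define a nonempty polyhedron {y : Γy ≥ b} containing y_obs. Conditionally on {ΓY ≥ b} and on the orthogonal projection Π_v^⊥Y = Π_v^⊥ y_obs, the random variable vᵀY is distributed as a Gaussian with mean vᵀθ and variance σ²‖v‖², truncated to the interval [V_lo, V_up], where with ρ = Γv/‖v‖², V_lo = vᵀy_obs − min_{j: ρ_j>0} (Γy_obs − b)_j/ρ_j and V_up = vᵀy_obs − max_{j: ρ_j<0} (Γy_obs − b)_j/ρ_j (with the conventions min ∅ = ∞,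 max ∅ = −∞). -/
open MeasureTheory ProbabilityTheory Matrix
open scoped ENNReal NNReal

lemma aux_lintegral_fin_prod {n : ℕ} {E : Fin n → Type*}
    [∀ i, MeasureSpace (E i)] [∀ i, SigmaFinite (volume : Measure (E i))]
    (f : (i : Fin n) → E i → ℝ≥0∞) (hf : ∀ i, Measurable (f i)) :
    ∫⁻ x : (i : Fin n) → E i, ∏ i, f i (x i) = ∏ i, ∫⁻ x, f i x := by
  induction n with
  | zero =>
      simp [volume_pi, lintegral_const]
  | succ n n_ih =>
      calc
        _ = ∫⁻ x : E 0 × ((i : Fin n) → E (Fin.succ i)),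
            f 0 x.1 * ∏ i : Fin n, f (Fin.succ i) (x.2 i) := by
          rw [volume_pi, ← ((measurePreserving_piFinSuccAbove
            (fun i => (volume : Measure (E i))) 0).symm).lintegral_comp_emb
            (MeasurableEquiv.measurableEmbedding _)]
          simp_rw [MeasurableEquiv.piFinSuccAbove_symm_apply, Fin.insertNthEquiv,
            Fin.prod_univ_succ, Fin.insertNth_zero, Equiv.coe_fn_mk, Fin.cons_succ]
          simp only [Fin.zero_succAbove, cast_eq, Fin.cons_zero, Measure.volume_eq_prod, volume_pi]
          rfl
        _ = (∫⁻ x, f 0 x) * ∏ i : Fin n, ∫⁻ (x : E (Fin.succ i)), f (Fin.succ i) x := by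
          rw [← n_ih _ (fun i => hf _), Measure.volume_eq_prod, volume_pi]
          exact lintegral_prod_mul (hf 0).aemeasurable
            (Finset.measurable_prod _ (fun i _ => (hf _).comp (measurable_pi_apply i))).aemeasurable
        _ = ∏ i, ∫⁻ x, f i x := by rw [Fin.prod_univ_succ]

lemma aux_pi_withDensity {n : ℕ} (f : Fin n → ℝ → ℝ≥0∞) (hf : ∀ i, Measurable (f i)) (hfin : ∀ i x, f i x ≠ ∞) :
    Measure.pi (fun i => (volume : Measure ℝ).withDensity (f i)) =
      (volume : Measure (Fin n → ℝ)).withDensity (fun x => ∏ i, f i (x i)) := by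
  haveI : ∀ i, SigmaFinite ((volume : Measure ℝ).withDensity (f i)) :=
    fun i => SigmaFinite.withDensity_of_ne_top' (hfin i)
  refine Measure.pi_eq fun s hs => ?_
  rw [withDensity_apply _ (MeasurableSet.univ_pi hs), ← lintegral_indicator (MeasurableSet.univ_pi hs)]
  have hind : ∀ x : Fin n → ℝ, (Set.univ.pi s).indicator (fun x => ∏ i, f i (x i)) x
      = ∏ i, (s i).indicator (f i) (x i) := by
    intro x
    by_cases hx : x ∈ Set.univ.pi s
    · rw [Set.indicator_of_mem hx]
      exact Finset.prod_congr rfl fun i _ =>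
        (Set.indicator_of_mem (hx i (Set.mem_univ i)) _).symm
    · rw [Set.indicator_of_notMem hx]
      obtain ⟨i, hi⟩ := not_forall.mp (Set.mem_univ_pi.not.mp hx)
      exact (Finset.prod_eq_zero (Finset.mem_univ i)
        (Set.indicator_of_notMem hi _)).symm
  simp_rw [hind]
  rw [aux_lintegral_fin_prod _ (fun i => (hf i).indicator (hs i))]
  exact Finset.prod_congr rfl fun i _ => by
    rw [withDensity_apply _ (hs i), ← lintegral_indicator (hs i)]

lemma aux_measurable_mulVec {m n : ℕ} (M : Matrix (Fin m) (Fin n) ℝ) :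
    Measurable (M.mulVec) := by
  apply measurable_pi_lambda
  intro i
  simp only [Matrix.mulVec, dotProduct]
  exact Finset.measurable_sum _ fun j _ => (measurable_pi_apply j).const_mul _

lemma aux_map_withDensity {n : ℕ} {L L' : (Fin n → ℝ) → (Fin n → ℝ)}
    (hL : Measurable L) (hL' : Measurable L') (hinv : ∀ y, L' (L y) = y)
    (D : (Fin n → ℝ) → ℝ≥0∞) (hD : Measurable D) (ρ : Measure (Fin n → ℝ)) :
    (ρ.withDensity D).map L = (ρ.map L).withDensity (fun x => D (L' x)) := by
  ext s hs
  rw [Measure.map_apply hL hs, withDensity_apply _ (hL hs), withDensity_apply _ hs,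
    setLIntegral_map hs (show Measurable fun x => D (L' x) from hD.comp hL') hL]
  simp only [hinv]

lemma aux_gaussian_pi_eq_withDensity {n : ℕ} (θ : Fin n → ℝ) (V : ℝ≥0) (hV : V ≠ 0) :
    Measure.pi (fun i => gaussianReal (θ i) V) =
      (volume : Measure (Fin n → ℝ)).withDensity (fun x => ∏ i, gaussianPDF (θ i) V (x i)) := by
  simp_rw [gaussianReal_of_var_ne_zero _ hV]
  exact aux_pi_withDensity _ (fun i => measurable_gaussianPDF _ _)
    (fun i x => ENNReal.ofReal_ne_top)

lemma aux_gaussian_pi_map_orth {n : ℕ} (θ : Fin n → ℝ) (V : ℝ≥0) (hV : V ≠ 0)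
    (M : Matrix (Fin n) (Fin n) ℝ) (hM : M * Mᵀ = 1) :
    (Measure.pi (fun i => gaussianReal (θ i) V)).map (M.mulVec) =
      Measure.pi (fun i => gaussianReal (M.mulVec θ i) V) := by
  have hM' : Mᵀ * M = 1 := mul_eq_one_comm.mp hM
  have hinv : ∀ y, Mᵀ.mulVec (M.mulVec y) = y := fun y => by
    rw [Matrix.mulVec_mulVec, hM', Matrix.one_mulVec]
  have hdetsq : M.det ^ 2 = 1 := by
    have := congrArg Matrix.det hM
    rwa [Matrix.det_mul, Matrix.det_transpose, Matrix.det_one, ← sq] at this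
  have hdet1 : |M.det⁻¹| = 1 := by
    have habs : |M.det| = 1 := by nlinarith [sq_abs M.det, abs_nonneg M.det]
    rw [abs_inv, habs, inv_one]
  have hvol : (volume : Measure (Fin n → ℝ)).map (M.mulVec) = volume := by
    have hco : (M.mulVec : (Fin n → ℝ) → (Fin n → ℝ)) = ⇑(Matrix.toLin' M) := by
      funext y; rw [Matrix.toLin'_apply]
    have hdetne : LinearMap.det (Matrix.toLin' M) ≠ 0 := by
      rw [LinearMap.det_toLin']
      intro h; rw [h] at hdetsq; norm_num at hdetsq
    rw [hco, Real.map_linearMap_volume_pi_eq_smul_volume_pi hdetne, LinearMap.det_toLin',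
      hdet1, ENNReal.ofReal_one, one_smul]
  rw [aux_gaussian_pi_eq_withDensity θ V hV, aux_gaussian_pi_eq_withDensity (M.mulVec θ) V hV,
    aux_map_withDensity (aux_measurable_mulVec M) (aux_measurable_mulVec Mᵀ) hinv _
      (show Measurable fun x : Fin n → ℝ => ∏ i, gaussianPDF (θ i) V (x i) from
        Finset.measurable_prod _ fun i _ =>
          (measurable_gaussianPDF _ _).comp (measurable_pi_apply i)) volume,
    hvol]
  congr 1
  funext x
  have key : ∑ i, ((Mᵀ.mulVec x) i - θ i) ^ 2 = ∑ i, (x i - M.mulVec θ i) ^ 2 := by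
    have hz : (fun i => Mᵀ.mulVec x i - θ i) = Mᵀ.mulVec (x - M.mulVec θ) := by
      rw [Matrix.mulVec_sub, Matrix.mulVec_mulVec, hM', Matrix.one_mulVec]
      rfl
    have hdot : ∀ w : Fin n → ℝ, ∑ i, (w i) ^ 2 = w ⬝ᵥ w := by
      intro w; simp [dotProduct, sq]
    calc ∑ i, ((Mᵀ.mulVec x) i - θ i) ^ 2
        = (Mᵀ.mulVec (x - M.mulVec θ)) ⬝ᵥ (Mᵀ.mulVec (x - M.mulVec θ)) := by
          rw [← hz]; exact hdot _
      _ = (x - M.mulVec θ) ⬝ᵥ (x - M.mulVec θ) := by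
          rw [Matrix.dotProduct_mulVec, Matrix.vecMul_transpose, Matrix.mulVec_mulVec, hM,
            Matrix.one_mulVec]
      _ = ∑ i, (x i - M.mulVec θ i) ^ 2 := (hdot _).symm
  simp only [gaussianPDF_def]
  rw [← ENNReal.ofReal_prod_of_nonneg (fun i _ => gaussianPDFReal_nonneg _ _ _),
    ← ENNReal.ofReal_prod_of_nonneg (fun i _ => gaussianPDFReal_nonneg _ _ _)]
  congr 1
  simp only [gaussianPDFReal]
  rw [Finset.prod_mul_distrib, Finset.prod_mul_distrib, ← Real.exp_sum, ← Real.exp_sum]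
  congr 1
  rw [← Finset.sum_div, ← Finset.sum_div]
  congr 2
  simpa only [neg_inj, Finset.sum_neg_distrib] using key

lemma aux_measurable_dot {n : ℕ} (v : Fin n → ℝ) : Measurable (fun y : Fin n → ℝ => v ⬝ᵥ y) := by
  simp only [dotProduct]
  exact Finset.measurable_sum _ fun j _ => (measurable_pi_apply j).const_mul _

lemma aux_measurable_proj {n : ℕ} (v : Fin n → ℝ) :
    Measurable (fun y : Fin n → ℝ => y - ((v ⬝ᵥ y) / (v ⬝ᵥ v)) • v) :=
  measurable_id.sub (((aux_measurable_dot v).div_const _).smul_const v)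

lemma aux_map_pair {n : ℕ} (θ v : Fin n → ℝ) (hv : v ≠ 0) (σ : ℝ) (hσ : 0 < σ) :
    (Measure.pi fun i => gaussianReal (θ i) ⟨σ ^ 2, sq_nonneg σ⟩).map
        (fun y => (y - ((v ⬝ᵥ y) / (v ⬝ᵥ v)) • v, v ⬝ᵥ y)) =
      ((Measure.pi fun i => gaussianReal (θ i) ⟨σ ^ 2, sq_nonneg σ⟩).map
          (fun y => y - ((v ⬝ᵥ y) / (v ⬝ᵥ v)) • v)).prod
        (gaussianReal (v ⬝ᵥ θ) ⟨σ ^ 2 * ∑ i, v i ^ 2, by positivity⟩) := by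
  obtain ⟨N, rfl⟩ : ∃ N, n = N + 1 := by
    cases n with
    | zero => exact absurd (funext fun i => absurd i.isLt (by omega)) hv
    | succ N => exact ⟨N, rfl⟩
  set c : ℝ := v ⬝ᵥ v with hc_def
  have hc : 0 < c := by
    have h0 : (0:ℝ) ≤ c := by
      simp only [hc_def, dotProduct]
      exact Finset.sum_nonneg fun i _ => mul_self_nonneg _
    exact lt_of_le_of_ne h0 (Ne.symm ((dotProduct_self_eq_zero).not.mpr hv))
  have hsc : (0:ℝ) < Real.sqrt c := Real.sqrt_pos.mpr hc
  have hscsq : Real.sqrt c * Real.sqrt c = c := Real.mul_self_sqrt hc.le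
  -- build an orthonormal basis with b 0 = normalized v
  let u : EuclideanSpace ℝ (Fin (N + 1)) := WithLp.toLp 2 (fun j => (Real.sqrt c)⁻¹ * v j)
  have hinner_uu : ∑ j, u j * u j = 1 := by
    have h1 : ∀ j, u j * u j = c⁻¹ * (v j * v j) := by
      intro j
      have hj : u j = (Real.sqrt c)⁻¹ * v j := rfl
      rw [hj, mul_mul_mul_comm, ← mul_inv, hscsq]
    rw [Finset.sum_congr rfl fun j _ => h1 j, ← Finset.mul_sum]
    have h2 : ∑ j, v j * v j = c := rfl
    rw [h2, inv_mul_cancel₀ hc.ne']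
  have horth : Orthonormal ℝ (Set.restrict {0} (fun _ : Fin (N + 1) => u)) := by
    constructor
    · intro i
      have hnu : ‖u‖ = 1 := by
        rw [EuclideanSpace.norm_eq]
        have h2 : ∑ j, ‖u j‖ ^ 2 = 1 := by
          simpa [Real.norm_eq_abs, sq_abs, sq] using hinner_uu
        rw [h2, Real.sqrt_one]
      exact hnu
    · intro i j hij
      exact absurd (Subtype.ext (i.2.trans j.2.symm)) hij
  obtain ⟨b, hb0⟩ := horth.exists_orthonormalBasis_extension_of_card_eq
    (by rw [finrank_euclideanSpace_fin, Fintype.card_fin])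
  have hbu : b 0 = u := hb0 0 rfl
  -- the rotation matrix
  set M : Matrix (Fin (N + 1)) (Fin (N + 1)) ℝ := Matrix.of (fun i j => b i j) with hM_def
  have hbij : ∀ i k, ∑ j, b i j * b k j = if i = k then (1:ℝ) else 0 := by
    intro i k
    have := orthonormal_iff_ite.mp b.orthonormal i k
    simpa [PiLp.inner_apply, RCLike.inner_apply, conj_trivial, mul_comm] using this
  have hMMt : M * Mᵀ = 1 := by
    ext i k
    simp only [Matrix.mul_apply, Matrix.transpose_apply, hM_def, Matrix.of_apply,
      Matrix.one_apply]
    exact hbij i k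
  have hMtM : Mᵀ * M = 1 := mul_eq_one_comm.mp hMMt
  -- key pointwise facts
  have hrow0 : ∀ j, M 0 j = (Real.sqrt c)⁻¹ * v j := by
    intro j
    show b 0 j = _
    rw [hbu]
  have hA : ∀ y : Fin (N + 1) → ℝ, (M.mulVec y) 0 = (Real.sqrt c)⁻¹ * (v ⬝ᵥ y) := by
    intro y
    simp only [Matrix.mulVec, dotProduct, hrow0, Finset.mul_sum]
    exact Finset.sum_congr rfl fun j _ => by ring
  have hdot : ∀ y : Fin (N + 1) → ℝ, v ⬝ᵥ y = Real.sqrt c * (M.mulVec y) 0 := by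
    intro y
    rw [hA]
    field_simp
  have hupdate : ∀ x : Fin (N + 1) → ℝ,
      Function.update x 0 0 = x - Pi.single 0 (x 0) := by
    intro x
    funext i
    by_cases hi : i = 0
    · subst hi; simp
    · simp [Function.update_of_ne hi, Pi.single_eq_of_ne hi]
  have hproj_eq : ∀ y : Fin (N + 1) → ℝ,
      y - ((v ⬝ᵥ y) / (v ⬝ᵥ v)) • v
        = Mᵀ.mulVec (Function.update (M.mulVec y) 0 0) := by
    intro y
    rw [hupdate, Matrix.mulVec_sub, Matrix.mulVec_mulVec, hMtM, Matrix.one_mulVec,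
      Matrix.mulVec_single]
    congr 1
    funext j
    simp only [Pi.smul_apply, Matrix.col_apply, op_smul_eq_mul]
    simp only [Matrix.transpose_apply, hrow0, hA, Pi.smul_apply, smul_eq_mul]
    rw [div_eq_mul_inv, ← hscsq]
    field_simp
    rw [Real.sqrt_sq hsc.le, Real.sq_sqrt hc.le, hc_def, mul_div_assoc,
      div_self (by rw [← hc_def]; exact hc.ne'), mul_one]
  -- the coordinate splitting equivalence
  set e := MeasurableEquiv.piFinSuccAbove (fun _ : Fin (N + 1) => ℝ) 0 with he_def
  have hesymm : ∀ x : Fin (N + 1) → ℝ,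
      Function.update x 0 0 = e.symm (0, (e x).2) := by
    intro x
    have h1 : e x = (x 0, fun j => x (Fin.succAbove 0 j)) := rfl
    have h2 : ∀ (t : ℝ) (z : Fin N → ℝ), e.symm (t, z) = Fin.insertNth 0 t z := by
      intro t z
      simp only [he_def, MeasurableEquiv.piFinSuccAbove]
      rfl
    rw [h1, h2]
    funext i
    cases i using Fin.cases with
    | zero => simp [Fin.insertNth_zero]
    | succ j =>
        simp only [Fin.insertNth_zero, Fin.cons_succ, Fin.zero_succAbove, cast_eq,
          Function.update_of_ne (Fin.succ_ne_zero j)]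
  -- assemble the measure identity
  set V : ℝ≥0 := ⟨σ ^ 2, sq_nonneg σ⟩ with hV_def
  have hVne : V ≠ 0 := by
    intro h
    have := congrArg (fun x : ℝ≥0 => (x : ℝ)) h
    simp only [hV_def, NNReal.coe_zero] at this
    exact absurd this (pow_ne_zero 2 hσ.ne')
  set μ : Measure (Fin (N + 1) → ℝ) := Measure.pi fun i => gaussianReal (θ i) V with hμ_def
  set A : (Fin N → ℝ) → (Fin (N + 1) → ℝ) := fun z => Mᵀ.mulVec (e.symm (0, z)) with hA_def
  set B : ℝ → ℝ := fun t => Real.sqrt c * t with hB_def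
  have hGmeas_A : Measurable A :=
    (aux_measurable_mulVec Mᵀ).comp (e.symm.measurable.comp (measurable_const.prodMk measurable_id))
  have hfactor : (fun y : Fin (N + 1) → ℝ => (y - ((v ⬝ᵥ y) / (v ⬝ᵥ v)) • v, v ⬝ᵥ y))
      = (Prod.map A B ∘ Prod.swap) ∘ (⇑e ∘ M.mulVec) := by
    funext y
    simp only [Function.comp_apply, Prod.map, Prod.swap, hA_def, hB_def]
    refine Prod.ext ?_ ?_
    · simp only
      rw [hproj_eq y, hesymm (M.mulVec y)]
    · simp only
      exact hdot y
  have hmap1 : μ.map (M.mulVec) = Measure.pi fun i => gaussianReal ((M.mulVec θ) i) V :=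
    aux_gaussian_pi_map_orth θ V hVne M hMMt
  have hmap2 : (Measure.pi fun i => gaussianReal ((M.mulVec θ) i) V).map e
      = (gaussianReal ((M.mulVec θ) 0) V).prod
        (Measure.pi fun j => gaussianReal ((M.mulVec θ) (Fin.succAbove 0 j)) V) :=
    (measurePreserving_piFinSuccAbove (fun i => gaussianReal ((M.mulVec θ) i) V) 0).map_eq
  have hswap : ((gaussianReal ((M.mulVec θ) 0) V).prod
        (Measure.pi fun j => gaussianReal ((M.mulVec θ) (Fin.succAbove 0 j)) V)).map Prod.swap
      = (Measure.pi fun j => gaussianReal ((M.mulVec θ) (Fin.succAbove 0 j)) V).prod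
        (gaussianReal ((M.mulVec θ) 0) V) := Measure.prod_swap
  have hBmap : (gaussianReal ((M.mulVec θ) 0) V).map B
      = gaussianReal (v ⬝ᵥ θ) ⟨σ ^ 2 * ∑ i, v i ^ 2, by positivity⟩ := by
    have h1 : (gaussianReal ((M.mulVec θ) 0) V).map (Real.sqrt c * ·)
        = gaussianReal (Real.sqrt c * (M.mulVec θ) 0)
          ((⟨Real.sqrt c ^ 2, sq_nonneg _⟩ * V : ℝ≥0)) :=
      gaussianReal_map_const_mul _
    have h2 : Real.sqrt c * (M.mulVec θ) 0 = v ⬝ᵥ θ := (hdot θ).symm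
    have h3 : ((⟨Real.sqrt c ^ 2, sq_nonneg _⟩ * V : ℝ≥0))
        = ⟨σ ^ 2 * ∑ i, v i ^ 2, by positivity⟩ := by
      ext
      change Real.sqrt c ^ 2 * (V : ℝ) = σ ^ 2 * ∑ i, v i ^ 2
      rw [Real.sq_sqrt hc.le]
      have hsum : ∑ i, v i ^ 2 = c := by
        simp only [hc_def, dotProduct, pow_two]
      rw [hsum, hV_def]
      change c * σ ^ 2 = σ ^ 2 * c
      ring
    rw [hB_def]
    rw [show (fun t => Real.sqrt c * t) = (Real.sqrt c * ·) from rfl, h1, h2, h3]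
  set γ : Measure ℝ := gaussianReal (v ⬝ᵥ θ) ⟨σ ^ 2 * ∑ i, v i ^ 2, by positivity⟩ with hγ_def
  haveI : IsProbabilityMeasure γ := instIsProbabilityMeasureGaussianReal _ _
  set P : Measure (Fin (N + 1) → ℝ) :=
    (Measure.pi fun j => gaussianReal ((M.mulVec θ) (Fin.succAbove 0 j)) V).map A with hP_def
  have hBmeas : Measurable B := measurable_id.const_mul (Real.sqrt c)
  have m1 : Measurable (⇑e ∘ M.mulVec) := e.measurable.comp (aux_measurable_mulVec M)
  have m2 : Measurable (Prod.map A B) := hGmeas_A.prodMap hBmeas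
  have hmain : μ.map (fun y => (y - ((v ⬝ᵥ y) / (v ⬝ᵥ v)) • v, v ⬝ᵥ y)) = P.prod γ := by
    have hcomp : μ.map (⇑e ∘ M.mulVec)
        = (gaussianReal ((M.mulVec θ) 0) V).prod
          (Measure.pi fun j => gaussianReal ((M.mulVec θ) (Fin.succAbove 0 j)) V) := by
      rw [← Measure.map_map e.measurable (aux_measurable_mulVec M), hmap1, hmap2]
    calc μ.map (fun y => (y - ((v ⬝ᵥ y) / (v ⬝ᵥ v)) • v, v ⬝ᵥ y))
        = ((μ.map (⇑e ∘ M.mulVec)).map Prod.swap).map (Prod.map A B) := by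
          rw [hfactor, Measure.map_map m2 measurable_swap,
            Measure.map_map (m2.comp measurable_swap) m1]
      _ = P.prod γ := by
          rw [hcomp, hswap, ← Measure.map_prod_map _ _ hGmeas_A hBmeas, hBmap]
  have hPprob : IsProbabilityMeasure P := by
    rw [hP_def]
    exact Measure.isProbabilityMeasure_map hGmeas_A.aemeasurable
  have hfst : P = μ.map (fun y => y - ((v ⬝ᵥ y) / (v ⬝ᵥ v)) • v) := by
    have h1 : (μ.map (fun y => (y - ((v ⬝ᵥ y) / (v ⬝ᵥ v)) • v, v ⬝ᵥ y))).fst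
        = μ.map (fun y => y - ((v ⬝ᵥ y) / (v ⬝ᵥ v)) • v) :=
      Measure.fst_map_prodMk (aux_measurable_dot v)
    rw [hmain] at h1
    rw [← h1, Measure.fst_prod]
  rw [hmain, hfst]

lemma aux_ereal_sub_le (a x : ℝ) (I : EReal) :
    (a : EReal) - I ≤ (x : EReal) ↔ ((a - x : ℝ) : EReal) ≤ I := by
  induction I using EReal.rec with
  | bot =>
      simp only [EReal.coe_sub_bot, top_le_iff, le_bot_iff]
      exact ⟨fun h => absurd h (EReal.coe_ne_top x), fun h => absurd h (EReal.coe_ne_bot _)⟩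
  | coe y =>
      rw [← EReal.coe_sub, EReal.coe_le_coe_iff, EReal.coe_le_coe_iff]
      constructor <;> intro <;> linarith
  | top => simp

lemma aux_ereal_le_sub (a x : ℝ) (J : EReal) :
    (x : EReal) ≤ (a : EReal) - J ↔ J ≤ ((a - x : ℝ) : EReal) := by
  induction J using EReal.rec with
  | bot => simp
  | coe y =>
      rw [← EReal.coe_sub, EReal.coe_le_coe_iff, EReal.coe_le_coe_iff]
      constructor <;> intro <;> linarith
  | top =>
      simp only [EReal.sub_top, le_bot_iff, top_le_iff]
      exact ⟨fun h => absurd h (EReal.coe_ne_bot x), fun h => absurd h (EReal.coe_ne_top _)⟩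

lemma aux_cond_map {α β : Type*} [MeasurableSpace α] [MeasurableSpace β]
    (μ : Measure α) {φ : α → β} (hφ : Measurable φ) {T : Set β} (hT : MeasurableSet T) :
    (μ[|φ ⁻¹' T]).map φ = (μ.map φ)[|T] := by
  rw [ProbabilityTheory.cond, ProbabilityTheory.cond, Measure.map_smul,
    Measure.restrict_map hφ hT, Measure.map_apply hφ hT]

lemma aux_meas_inf {δ : Type*} [MeasurableSpace δ] {ι : Type*} (s : Finset ι)
    (f : ι → δ → EReal) (hf : ∀ i, Measurable (f i)) :
    Measurable (fun a => s.inf fun i => f i a) := by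
  classical
  induction s using Finset.induction_on with
  | empty => simpa using measurable_const
  | insert _ _ h ih =>
      simp only [Finset.inf_insert]
      exact (hf _).min ih

lemma aux_meas_sup {δ : Type*} [MeasurableSpace δ] {ι : Type*} (s : Finset ι)
    (f : ι → δ → EReal) (hf : ∀ i, Measurable (f i)) :
    Measurable (fun a => s.sup fun i => f i a) := by
  classical
  induction s using Finset.induction_on with
  | empty => simpa using measurable_const
  | insert _ _ h ih =>
      simp only [Finset.sup_insert]
      exact (hf _).max ih

lemma aux_disint {W : Type*} [MeasurableSpace W]
    (pp : Measure W) [IsFiniteMeasure pp] (γ : Measure ℝ) [IsProbabilityMeasure γ]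
    {T : Set (W × ℝ)} (hT : MeasurableSet T)
    (κ : ProbabilityTheory.Kernel W ℝ) [ProbabilityTheory.IsFiniteKernel κ]
    (hκ : ∀ᵐ w ∂pp, ∀ B : Set ℝ, MeasurableSet B →
      κ w B * γ (Prod.mk w ⁻¹' T) = γ (Prod.mk w ⁻¹' T ∩ B)) :
    (pp.prod γ)[|T] = ((pp.prod γ)[|T]).fst ⊗ₘ κ := by
  set Z := (pp.prod γ) T with hZ_def
  have hfst : ((pp.prod γ)[|T]).fst
      = Z⁻¹ • pp.withDensity (fun w => γ (Prod.mk w ⁻¹' T)) := by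
    ext A hA
    rw [Measure.fst_apply hA, ProbabilityTheory.cond, Measure.smul_apply,
      Measure.restrict_apply (measurable_fst hA), Measure.smul_apply, smul_eq_mul, smul_eq_mul,
      withDensity_apply _ hA, Measure.prod_apply ((measurable_fst hA).inter hT)]
    congr 1
    rw [← lintegral_indicator hA]
    refine lintegral_congr fun w => ?_
    by_cases hw : w ∈ A
    · rw [Set.indicator_of_mem hw]
      congr 1
      ext x
      simp [hw]
    · rw [Set.indicator_of_notMem hw]
      convert measure_empty
      · ext x; simp [hw]
      · infer_instance
  ext s hs
  rw [Measure.compProd_apply hs, hfst]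
  rw [lintegral_smul_measure,
    lintegral_withDensity_eq_lintegral_mul _ (measurable_measure_prodMk_left hT)
      (ProbabilityTheory.Kernel.measurable_kernel_prodMk_left hs),
    ProbabilityTheory.cond_apply hT, Measure.prod_apply (hT.inter hs)]
  congr 1
  refine lintegral_congr_ae ?_
  filter_upwards [hκ] with w hw
  have : Prod.mk w ⁻¹' (T ∩ s) = Prod.mk w ⁻¹' T ∩ Prod.mk w ⁻¹' s := rfl
  rw [this, Pi.mul_apply, mul_comm, hw _ (measurable_prodMk_left hs)]

/-- Polyhedral lemma / truncated Gaussian law. Let `Y ~ N(θ, σ²Iₙ)`, `v ≠ 0`,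
and let `{y : Γy ≥ b}` be a polyhedron containing `y_obs`. Conditionally on `{ΓY ≥ b}` and on
`Π_v^⊥ Y` (the conditioning value being `w = Π_v^⊥ y_obs`), the law of `vᵀY` is that of a
`N(vᵀθ, σ²‖v‖²)` random variable truncated to `[V_lo, V_up]`, where with `ρ = Γv/‖v‖²`,
`V_lo = vᵀw − min_{j : ρ_j>0} (Γw − b)_j/ρ_j` and `V_up = vᵀw − max_{j : ρ_j<0} (Γw − b)_j/ρ_j`
(conventions `min ∅ = +∞`, `max ∅ = −∞`, encoded in `EReal`; these quantities agree with the
formulas at `y_obs` since they depend on `y_obs` only through `Π_v^⊥ y_obs`). -/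
theorem saturated_model_truncated_gaussian (n m : ℕ)
    (θ v : Fin n → ℝ) (hv : v ≠ 0) (σ : ℝ) (hσ : 0 < σ)
    (Γ : Matrix (Fin m) (Fin n) ℝ) (bb : Fin m → ℝ) (yobs : Fin n → ℝ)
    (hyobs : ∀ i, bb i ≤ Γ.mulVec yobs i)
    (μ : Measure (Fin n → ℝ))
    (hμ : μ = Measure.pi fun i => gaussianReal (θ i) ⟨σ ^ 2, sq_nonneg σ⟩)
    (S : Set (Fin n → ℝ)) (hS : S = {y | ∀ i, bb i ≤ Γ.mulVec y i})
    (proj : (Fin n → ℝ) → (Fin n → ℝ))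
    (hproj : proj = fun y => y - ((v ⬝ᵥ y) / (v ⬝ᵥ v)) • v)
    (ρ : Fin m → ℝ) (hρ : ρ = fun i => Γ.mulVec v i / (v ⬝ᵥ v))
    (Vlo Vup : (Fin n → ℝ) → EReal)
    (hVlo : Vlo = fun w => ((v ⬝ᵥ w : ℝ) : EReal) -
      ((Finset.univ.filter fun i => 0 < ρ i).inf
        fun i => (((Γ.mulVec w i - bb i) / ρ i : ℝ) : EReal)))
    (hVup : Vup = fun w => ((v ⬝ᵥ w : ℝ) : EReal) -
      ((Finset.univ.filter fun i => ρ i < 0).sup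
        fun i => (((Γ.mulVec w i - bb i) / ρ i : ℝ) : EReal))) :
    ∀ᵐ w ∂((μ[|S]).map proj),
      condDistrib (fun y => v ⬝ᵥ y) proj (μ[|S]) w =
        (gaussianReal (v ⬝ᵥ θ) ⟨σ ^ 2 * ∑ i, v i ^ 2, by positivity⟩)[|
          {x : ℝ | Vlo w ≤ (x : EReal) ∧ (x : EReal) ≤ Vup w}] := by
  classical
  have hf : Measurable fun y : Fin n → ℝ => v ⬝ᵥ y := aux_measurable_dot v
  have hg : Measurable proj := by rw [hproj]; exact aux_measurable_proj v
  set c : ℝ := v ⬝ᵥ v with hc_def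
  have hc : 0 < c := by
    have h0 : (0:ℝ) ≤ c := by
      simp only [hc_def, dotProduct]
      exact Finset.sum_nonneg fun i _ => mul_self_nonneg _
    exact lt_of_le_of_ne h0 (Ne.symm ((dotProduct_self_eq_zero).not.mpr hv))
  set γm : Measure ℝ :=
    gaussianReal (v ⬝ᵥ θ) ⟨σ ^ 2 * ∑ i, v i ^ 2, by positivity⟩ with hγ_def
  haveI : IsProbabilityMeasure γm := instIsProbabilityMeasureGaussianReal _ _
  -- the polyhedron, lifted to the (projection, dot-product) coordinates
  set T : Set ((Fin n → ℝ) × ℝ) :=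
    {p | ∀ i, bb i ≤ Γ.mulVec (p.1 + (p.2 / c) • v) i} with hT_def
  have hTmeas : MeasurableSet T := by
    have hTi : T = ⋂ i, {p : (Fin n → ℝ) × ℝ | bb i ≤ Γ.mulVec (p.1 + (p.2 / c) • v) i} := by
      ext p; simp [hT_def, Set.mem_iInter]
    rw [hTi]
    refine MeasurableSet.iInter fun i => measurableSet_le measurable_const ?_
    exact (measurable_pi_apply i).comp ((aux_measurable_mulVec Γ).comp
      (measurable_fst.add ((measurable_snd.div_const c).smul_const v)))
  have hrecon : ∀ y : Fin n → ℝ, (y - ((v ⬝ᵥ y) / c) • v) + ((v ⬝ᵥ y) / c) • v = y :=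
    fun y => sub_add_cancel y _
  have hSpre : S = (fun y => (proj y, v ⬝ᵥ y)) ⁻¹' T := by
    ext y
    simp only [hS, hT_def, Set.mem_setOf_eq, Set.mem_preimage, hproj]
    rw [hrecon y]
  -- the truncation graph
  set T' : Set ((Fin n → ℝ) × ℝ) :=
    {p | Vlo p.1 ≤ (p.2 : EReal) ∧ (p.2 : EReal) ≤ Vup p.1} with hT'_def
  have hT'meas : MeasurableSet T' := by
    have hmf : Measurable fun p : (Fin n → ℝ) × ℝ => ((v ⬝ᵥ p.1 - p.2 : ℝ) : EReal) :=
      measurable_coe_real_ereal.comp ((hf.comp measurable_fst).sub measurable_snd)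
    have hinf : Measurable fun p : (Fin n → ℝ) × ℝ =>
        (Finset.univ.filter fun i => 0 < ρ i).inf
          fun i => (((Γ.mulVec p.1 i - bb i) / ρ i : ℝ) : EReal) :=
      aux_meas_inf _ _ fun i => measurable_coe_real_ereal.comp
        ((((measurable_pi_apply i).comp
          ((aux_measurable_mulVec Γ).comp measurable_fst)).sub_const _).div_const _)
    have hsup : Measurable fun p : (Fin n → ℝ) × ℝ =>
        (Finset.univ.filter fun i => ρ i < 0).sup
          fun i => (((Γ.mulVec p.1 i - bb i) / ρ i : ℝ) : EReal) :=
      aux_meas_sup _ _ fun i => measurable_coe_real_ereal.comp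
        ((((measurable_pi_apply i).comp
          ((aux_measurable_mulVec Γ).comp measurable_fst)).sub_const _).div_const _)
    have hTalt : T' = {p : (Fin n → ℝ) × ℝ | ((v ⬝ᵥ p.1 - p.2 : ℝ) : EReal) ≤
          (Finset.univ.filter fun i => 0 < ρ i).inf
            (fun i => (((Γ.mulVec p.1 i - bb i) / ρ i : ℝ) : EReal))} ∩
        {p : (Fin n → ℝ) × ℝ | (Finset.univ.filter fun i => ρ i < 0).sup
            (fun i => (((Γ.mulVec p.1 i - bb i) / ρ i : ℝ) : EReal))
          ≤ ((v ⬝ᵥ p.1 - p.2 : ℝ) : EReal)} := by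
      ext p
      simp only [hT'_def, Set.mem_setOf_eq, Set.mem_inter_iff, hVlo, hVup]
      exact and_congr (aux_ereal_sub_le _ _ _) (aux_ereal_le_sub _ _ _)
    rw [hTalt]
    exact (measurableSet_le hmf hinf).inter (measurableSet_le hsup hmf)
  -- the truncated-Gaussian kernel
  have hκmeas : Measurable (fun w => γm[|Prod.mk w ⁻¹' T']) := by
    refine Measure.measurable_of_measurable_coe _ fun B hB => ?_
    simp_rw [ProbabilityTheory.cond, Measure.smul_apply, Measure.restrict_apply hB, smul_eq_mul]
    refine Measurable.mul ((measurable_measure_prodMk_left hT'meas).inv) ?_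
    have hBT : ∀ w : Fin n → ℝ, B ∩ Prod.mk w ⁻¹' T'
        = Prod.mk w ⁻¹' ((Set.univ ×ˢ B) ∩ T') := by
      intro w; ext x
      constructor
      · rintro ⟨hxB, hxT⟩; exact ⟨⟨trivial, hxB⟩, hxT⟩
      · rintro ⟨⟨-, hxB⟩, hxT⟩; exact ⟨hxB, hxT⟩
    have hfun : (fun w : Fin n → ℝ => γm (B ∩ Prod.mk w ⁻¹' T'))
        = fun w => γm (Prod.mk w ⁻¹' ((Set.univ ×ˢ B) ∩ T')) := funext fun w => congrArg γm (hBT w)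
    rw [hfun]
    exact measurable_measure_prodMk_left ((MeasurableSet.univ.prod hB).inter hT'meas)
  set κ : Kernel (Fin n → ℝ) ℝ := ⟨fun w => γm[|Prod.mk w ⁻¹' T'], hκmeas⟩ with hκ_def
  have hκ_app : ∀ w, κ w = γm[|Prod.mk w ⁻¹' T'] := fun w => rfl
  haveI : IsFiniteKernel κ := by
    refine ⟨⟨1, ENNReal.one_lt_top, fun w => ?_⟩⟩
    rw [hκ_app w, ProbabilityTheory.cond_apply (measurable_prodMk_left hT'meas),
      Set.inter_univ]
    rcases eq_or_ne (γm (Prod.mk w ⁻¹' T')) 0 with h0 | h0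
    · rw [h0, mul_zero]; exact zero_le_one
    · rw [ENNReal.inv_mul_cancel h0 (measure_ne_top _ _)]
  -- trivial case: the conditioning event is null
  by_cases hZ : μ S = 0
  · have hzero : μ[|S] = 0 := by
      rw [ProbabilityTheory.cond, Measure.restrict_eq_zero.mpr hZ, smul_zero]
    simp only [hzero, Measure.map_zero]
    simp
  -- main case
  haveI hμprob : IsProbabilityMeasure μ := by
    rw [hμ]
    haveI : ∀ i, IsProbabilityMeasure (gaussianReal (θ i) ⟨σ ^ 2, sq_nonneg σ⟩) :=
      fun i => instIsProbabilityMeasureGaussianReal _ _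
    infer_instance
  haveI hprob : IsProbabilityMeasure (μ[|S]) := cond_isProbabilityMeasure hZ
  haveI : IsProbabilityMeasure (μ.map proj) := Measure.isProbabilityMeasure_map hg.aemeasurable
  have hpair_eq : (fun y => (proj y, v ⬝ᵥ y))
      = (fun y : Fin n → ℝ => (y - ((v ⬝ᵥ y) / (v ⬝ᵥ v)) • v, v ⬝ᵥ y)) := by rw [hproj]
  have h2 : μ.map (fun y => (proj y, v ⬝ᵥ y)) = (μ.map proj).prod γm := by
    rw [hpair_eq, hμ, hproj, hγ_def]
    exact aux_map_pair θ v hv σ hσ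
  have hν_pair : (μ[|S]).map (fun y => (proj y, v ⬝ᵥ y)) = ((μ.map proj).prod γm)[|T] := by
    rw [hSpre, aux_cond_map μ (hg.prodMk hf) hTmeas, h2]
  -- a.e., the projection is orthogonal to v
  have hae0 : ∀ᵐ w ∂(μ.map proj), v ⬝ᵥ w = 0 := by
    have hms : MeasurableSet {w : Fin n → ℝ | v ⬝ᵥ w = 0} :=
      hf (measurableSet_singleton 0)
    rw [MeasureTheory.ae_map_iff hg.aemeasurable hms]
    refine ae_of_all _ fun y => ?_
    rw [hproj]
    simp only [dotProduct_sub, dotProduct_smul, smul_eq_mul, ← hc_def]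
    rw [div_mul_cancel₀ _ hc.ne', sub_self]
  -- algebra: sections of T agree with the truncation intervals
  have hGam : ∀ (w : Fin n → ℝ) (x : ℝ) (i : Fin m),
      Γ.mulVec (w + (x / c) • v) i = Γ.mulVec w i + x * ρ i := by
    intro w x i
    rw [Matrix.mulVec_add, Matrix.mulVec_smul, hρ]
    simp only [Pi.add_apply, Pi.smul_apply, smul_eq_mul, ← hc_def]
    field_simp
  have hIwIff : ∀ (w : Fin n → ℝ), v ⬝ᵥ w = 0 → ∀ x : ℝ,
      ((w, x) ∈ T' ↔ ∀ i, ρ i ≠ 0 → bb i ≤ Γ.mulVec w i + x * ρ i) := by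
    intro w hw0 x
    simp only [hT'_def, Set.mem_setOf_eq, hVlo, hVup]
    rw [aux_ereal_sub_le, aux_ereal_le_sub, Finset.le_inf_iff, Finset.sup_le_iff]
    simp only [Finset.mem_filter, Finset.mem_univ, true_and, EReal.coe_le_coe_iff, hw0, zero_sub]
    constructor
    · rintro ⟨h1, h2⟩ i hne
      rcases lt_trichotomy (ρ i) 0 with hlt | heq | hgt
      · have := (div_le_iff_of_neg hlt).mp (h2 i hlt)
        nlinarith
      · exact absurd heq hne
      · have := (le_div_iff₀ hgt).mp (h1 i hgt)
        nlinarith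
    · intro h
      constructor
      · intro i hgt
        rw [le_div_iff₀ hgt]
        have := h i hgt.ne'
        nlinarith
      · intro i hlt
        rw [div_le_iff_of_neg hlt]
        have := h i hlt.ne
        nlinarith
  have hsec : ∀ w : Fin n → ℝ, v ⬝ᵥ w = 0 →
      (Prod.mk w ⁻¹' T = Prod.mk w ⁻¹' T' ∨ Prod.mk w ⁻¹' T = ∅) := by
    intro w hw0
    by_cases hW : ∀ i, ρ i = 0 → bb i ≤ Γ.mulVec w i
    · left
      ext x
      simp only [Set.mem_preimage, hT_def, Set.mem_setOf_eq]
      constructor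
      · intro hx
        exact (hIwIff w hw0 x).mpr fun i hne => by
          have := hx i; rwa [hGam w x i] at this
      · intro hx i
        rw [hGam w x i]
        rcases eq_or_ne (ρ i) 0 with h0 | hne
        · rw [h0, mul_zero, add_zero]; exact hW i h0
        · exact (hIwIff w hw0 x).mp hx i hne
    · right
      rw [Set.eq_empty_iff_forall_notMem]
      push_neg at hW
      obtain ⟨i, hρ0, hlt⟩ := hW
      intro x hx
      have hxi := hx i
      rw [hGam w x i, hρ0, mul_zero, add_zero] at hxi
      exact absurd hxi (not_le.mpr hlt)
  have hκae : ∀ᵐ w ∂(μ.map proj), ∀ B : Set ℝ, MeasurableSet B →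
      κ w B * γm (Prod.mk w ⁻¹' T) = γm (Prod.mk w ⁻¹' T ∩ B) := by
    filter_upwards [hae0] with w hw0
    intro B hB
    have hIwmeas : MeasurableSet (Prod.mk w ⁻¹' T') := measurable_prodMk_left hT'meas
    rcases hsec w hw0 with h | h
    · rw [h, hκ_app w, ProbabilityTheory.cond_apply hIwmeas]
      rcases eq_or_ne (γm (Prod.mk w ⁻¹' T')) 0 with h0 | h0
      · rw [h0, mul_zero]
        exact (measure_mono_null Set.inter_subset_left h0).symm
      · rw [mul_comm ((γm (Prod.mk w ⁻¹' T'))⁻¹) _, mul_assoc,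
          ENNReal.inv_mul_cancel h0 (measure_ne_top _ _), mul_one]
    · rw [h, measure_empty, mul_zero, Set.empty_inter, measure_empty]
  have h3 : ((μ.map proj).prod γm)[|T] = (((μ.map proj).prod γm)[|T]).fst ⊗ₘ κ :=
    aux_disint _ _ hTmeas κ hκae
  have h4 : (((μ.map proj).prod γm)[|T]).fst = (μ[|S]).map proj := by
    rw [← hν_pair, Measure.fst_map_prodMk hf]
  have hcomp : (μ[|S]).map (fun y => (proj y, v ⬝ᵥ y)) = ((μ[|S]).map proj) ⊗ₘ κ := by
    rw [hν_pair, h3, h4]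
  have hmainae := condDistrib_ae_eq_of_measure_eq_compProd_of_measurable hg hf hcomp
  filter_upwards [hmainae] with w hw
  rw [hw, hκ_app w]
  rfl
end

section
/- Under the truncated Gaussian law of vᵀY given the polyhedral selection event and Π_v^⊥Y = Π_v^⊥ y_obs, with vᵀθ = 0 the statistic T = (Φ(V_up/τ) − Φ(vᵀY/τ))/(Φ(V_up/τ) − Φ(V_lo/τ)), where τ² = σ²‖v‖², is uniformly distributed on [0,1]. -/
open MeasureTheory ProbabilityTheory Set

-- auxiliary facts about the standard gaussian cdf
lemma std_cdf_continuous : Continuous (fun s => cdf (gaussianReal 0 1) s) := by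
  rw [continuous_iff_continuousAt]
  intro x
  have hmono : Monotone (fun s => cdf (gaussianReal 0 1) s) := monotone_cdf _
  rw [hmono.continuousAt_iff_leftLim_eq_rightLim]
  have h1 : Function.rightLim (fun s => cdf (gaussianReal 0 1) s) x
      = cdf (gaussianReal 0 1) x := (cdf (gaussianReal 0 1)).rightLim_eq x
  have hsing : (cdf (gaussianReal 0 1)).measure {x} = 0 := by
    rw [measure_cdf]
    exact gaussianReal_absolutelyContinuous 0 one_ne_zero (Real.volume_singleton)
  rw [StieltjesFunction.measure_singleton] at hsing
  have hle : Function.leftLim (fun s => cdf (gaussianReal 0 1) s) x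
      ≤ cdf (gaussianReal 0 1) x := hmono.leftLim_le le_rfl
  have : cdf (gaussianReal 0 1) x - Function.leftLim (cdf (gaussianReal 0 1)) x ≤ 0 := by
    rwa [ENNReal.ofReal_eq_zero] at hsing
  have h2 : Function.leftLim (fun s => cdf (gaussianReal 0 1) s) x
      = cdf (gaussianReal 0 1) x := le_antisymm hle (by linarith [this])
  rw [h1, h2]

lemma std_cdf_strictMono : StrictMono (fun s => cdf (gaussianReal 0 1) s) := by
  intro a b hab
  have habs : volume ≪ gaussianReal 0 1 := gaussianReal_absolutelyContinuous' 0 one_ne_zero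
  have hne : gaussianReal 0 1 (Ioc a b) ≠ 0 := by
    intro h
    have := habs h
    rw [Real.volume_Ioc] at this
    simp [ENNReal.ofReal_eq_zero, sub_nonpos] at this
    linarith
  have hsplit : gaussianReal 0 1 (Iic a) + gaussianReal 0 1 (Ioc a b)
      = gaussianReal 0 1 (Iic b) := by
    rw [← measure_union (by rw [Set.disjoint_left]; intro x hx hx2; exact absurd hx2.1 (not_lt.2 hx)) measurableSet_Ioc,
      Iic_union_Ioc_eq_Iic hab.le]
  have hlt : gaussianReal 0 1 (Iic a) < gaussianReal 0 1 (Iic b) := by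
    rw [← hsplit]
    exact ENNReal.lt_add_right (measure_ne_top _ _) hne
  rw [← ofReal_cdf, ← ofReal_cdf] at hlt
  exact (ENNReal.ofReal_lt_ofReal_iff_of_nonneg (cdf_nonneg _ _)).mp hlt

lemma gauss_Iic (τ : ℝ) (hτ : 0 < τ) (a : ℝ) :
    gaussianReal 0 ⟨τ^2, sq_nonneg τ⟩ (Iic a)
      = ENNReal.ofReal (cdf (gaussianReal 0 1) (a/τ)) := by
  have hmap : (gaussianReal 0 1).map (τ * ·) = gaussianReal 0 ⟨τ^2, sq_nonneg τ⟩ := by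
    rw [gaussianReal_map_const_mul τ]
    congr 1
    · exact mul_zero τ
    · ext; simp; rfl
  rw [← hmap, Measure.map_apply (measurable_const_mul τ) measurableSet_Iic]
  have hpre : (τ * ·) ⁻¹' Iic a = Iic (a/τ) := by
    ext x
    simp only [Set.mem_preimage, Set.mem_Iic, le_div_iff₀ hτ, mul_comm]
  rw [hpre, ofReal_cdf]

lemma gauss_noatoms (τ : ℝ) (hτ : 0 < τ) :
    MeasureTheory.NoAtoms (gaussianReal 0 ⟨τ^2, sq_nonneg τ⟩) := by
  constructor
  intro x
  have hv : (⟨τ^2, sq_nonneg τ⟩ : NNReal) ≠ 0 := by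
    intro h
    have := congrArg NNReal.toReal h
    change τ ^ 2 = 0 at this
    nlinarith
  exact gaussianReal_absolutelyContinuous 0 hv (Real.volume_singleton)

lemma gauss_Icc (τ : ℝ) (hτ : 0 < τ) {a b : ℝ} (hab : a ≤ b) :
    gaussianReal 0 ⟨τ^2, sq_nonneg τ⟩ (Icc a b)
      = ENNReal.ofReal (cdf (gaussianReal 0 1) (b/τ) - cdf (gaussianReal 0 1) (a/τ)) := by
  have : NullSingletonClass _ := gauss_noatoms τ hτ
  set μ := gaussianReal 0 ⟨τ^2, sq_nonneg τ⟩ with hμ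
  haveI : IsProbabilityMeasure μ := instIsProbabilityMeasureGaussianReal _ _
  have h1 : μ (Icc a b) = μ (Ioc a b) := (measure_congr MeasureTheory.Ioc_ae_eq_Icc).symm
  have hsplit : μ (Iic a) + μ (Ioc a b) = μ (Iic b) := by
    rw [← measure_union (by rw [Set.disjoint_left]; intro x hx hx2; exact absurd hx2.1 (not_lt.2 hx)) measurableSet_Ioc,
      Iic_union_Ioc_eq_Iic hab]
  have h2 : μ (Ioc a b) = μ (Iic b) - μ (Iic a) := by
    rw [← hsplit]
    simp [ENNReal.add_sub_cancel_left (measure_ne_top μ _)]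
  rw [h1, h2, gauss_Iic τ hτ, gauss_Iic τ hτ,
    ENNReal.ofReal_sub _ (cdf_nonneg _ _)]

/-- Under the truncated Gaussian law (mean `vᵀθ = 0`, scale `τ`, truncation
interval `[V_lo, V_up]` with `V_lo < V_up`), the statistic
`T(x) = (Φ(V_up/τ) − Φ(x/τ)) / (Φ(V_up/τ) − Φ(V_lo/τ))` is uniformly distributed on `[0,1]`. -/
theorem tg_statistic_uniform (τ Vlo Vup : ℝ) (hτ : 0 < τ) (hV : Vlo < Vup)
    (Φ : ℝ → ℝ) (hΦ : Φ = fun s => cdf (gaussianReal 0 1) s)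
    (T : ℝ → ℝ)
    (hT : T = fun x => (Φ (Vup / τ) - Φ (x / τ)) / (Φ (Vup / τ) - Φ (Vlo / τ))) :
    Measure.map T ((gaussianReal 0 ⟨τ ^ 2, sq_nonneg τ⟩)[|Set.Icc Vlo Vup]) =
      volume.restrict (Set.Icc (0 : ℝ) 1) := by
  have hno : NullSingletonClass _ := gauss_noatoms τ hτ
  set μ := gaussianReal 0 ⟨τ ^ 2, sq_nonneg τ⟩ with hμ
  haveI : IsProbabilityMeasure μ := instIsProbabilityMeasureGaussianReal _ _
  have hΦ' : ∀ y, cdf (gaussianReal 0 1) y = Φ y := fun y => by rw [hΦ]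
  have hΦmono : StrictMono Φ := hΦ ▸ std_cdf_strictMono
  have hΦcont : Continuous Φ := hΦ ▸ std_cdf_continuous
  have hVd : Vlo / τ < Vup / τ := by gcongr
  have hΔ0 : 0 < Φ (Vup / τ) - Φ (Vlo / τ) := sub_pos.2 (hΦmono hVd)
  set Δ := Φ (Vup / τ) - Φ (Vlo / τ) with hΔdef
  clear_value Δ
  have hΔ : 0 < Δ := hΔ0
  have hμIcc : μ (Icc Vlo Vup) = ENNReal.ofReal Δ := by
    rw [hμ, gauss_Icc τ hτ hV.le, hΦ' , hΦ', hΔdef]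
  have hμne : μ (Icc Vlo Vup) ≠ 0 := by
    rw [hμIcc]; simp only [ne_eq, ENNReal.ofReal_eq_zero, not_le]; exact hΔ
  have hΔne : ENNReal.ofReal Δ ≠ 0 := by
    simp only [ne_eq, ENNReal.ofReal_eq_zero, not_le]; exact hΔ
  have hTm : Measurable T := by
    rw [hT]
    have hcdfm : Measurable Φ := hΦmono.monotone.measurable
    exact ((measurable_const.sub (hcdfm.comp (measurable_id.div_const τ)))).div_const _
  haveI : IsProbabilityMeasure (μ[|Icc Vlo Vup]) :=
    ProbabilityTheory.cond_isProbabilityMeasure hμne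
  haveI : IsProbabilityMeasure (Measure.map T (μ[|Icc Vlo Vup])) :=
    Measure.isProbabilityMeasure_map hTm.aemeasurable
  refine MeasureTheory.Measure.ext_of_Iic _ _ (fun t => ?_)
  rw [Measure.map_apply hTm measurableSet_Iic,
    ProbabilityTheory.cond_apply measurableSet_Icc,
    Measure.restrict_apply measurableSet_Iic]
  have hpre : T ⁻¹' Iic t = {x | Φ (Vup / τ) - t * Δ ≤ Φ (x / τ)} := by
    ext x
    simp only [hT, Set.mem_preimage, Set.mem_Iic, Set.mem_setOf_eq, ← hΔdef,
      div_le_iff₀ hΔ]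
    constructor <;> intro h <;> linarith
  rw [hpre]
  rcases le_or_gt t 0 with h0 | h0
  · -- t ≤ 0 : both sides are zero
    have hsub : Icc Vlo Vup ∩ {x | Φ (Vup / τ) - t * Δ ≤ Φ (x / τ)} ⊆ {Vup} := by
      rintro x ⟨hx1, hx2⟩
      simp only [Set.mem_setOf_eq] at hx2
      have htΔ : t * Δ ≤ 0 := mul_nonpos_of_nonpos_of_nonneg h0 hΔ.le
      have hxeq : x = Vup := by
        by_contra hne
        have hlt : x < Vup := lt_of_le_of_ne hx1.2 hne
        have hd : x / τ < Vup / τ := by gcongr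
        have := hΦmono hd
        linarith
      exact Set.mem_singleton_iff.2 hxeq
    have hLz : μ (Icc Vlo Vup ∩ {x | Φ (Vup / τ) - t * Δ ≤ Φ (x / τ)}) = 0 :=
      measure_mono_null hsub (measure_singleton _)
    have hRz : volume (Iic t ∩ Icc (0:ℝ) 1) = 0 := by
      refine measure_mono_null (fun x hx => ?_) (measure_singleton (0:ℝ))
      have hxeq : x = 0 := le_antisymm (hx.1.trans h0) hx.2.1
      exact Set.mem_singleton_iff.2 hxeq
    rw [hLz, hRz, mul_zero]
  rcases le_or_gt t 1 with h1 | h1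
  · -- 0 < t ≤ 1
    have hc : Φ (Vup / τ) - t * Δ ∈ Icc (Φ (Vlo / τ)) (Φ (Vup / τ)) :=
      ⟨by nlinarith [mul_nonneg (sub_nonneg.2 h1) hΔ.le],
       by nlinarith [mul_nonneg h0.le hΔ.le]⟩
    obtain ⟨s, hs, hΦs⟩ := intermediate_value_Icc hVd.le hΦcont.continuousOn hc
    have hτss : τ * s / τ = s := by field_simp
    have hτs_le : τ * s ≤ Vup := by
      have h2 := hs.2
      calc τ * s ≤ τ * (Vup / τ) := by nlinarith
        _ = Vup := by field_simp
    have hτs_ge : Vlo ≤ τ * s := by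
      have h2 := hs.1
      calc Vlo = τ * (Vlo / τ) := by field_simp
        _ ≤ τ * s := by nlinarith
    have hset : Icc Vlo Vup ∩ {x | Φ (Vup / τ) - t * Δ ≤ Φ (x / τ)} = Icc (τ * s) Vup := by
      ext x
      simp only [Set.mem_inter_iff, Set.mem_Icc, Set.mem_setOf_eq, ← hΦs]
      constructor
      · rintro ⟨⟨hxl, hxu⟩, hxc⟩
        refine ⟨?_, hxu⟩
        have hsx : s ≤ x / τ := (hΦmono.le_iff_le).mp hxc
        calc τ * s ≤ τ * (x / τ) := by nlinarith
          _ = x := by field_simp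
      · rintro ⟨hxl, hxu⟩
        have hsx : s ≤ x / τ := by
          rw [le_div_iff₀ hτ]; nlinarith
        exact ⟨⟨hτs_ge.trans hxl, hxu⟩, hΦmono.monotone hsx⟩
    have hμset : μ (Icc (τ * s) Vup) = ENNReal.ofReal (t * Δ) := by
      rw [hμ, gauss_Icc τ hτ hτs_le, hΦ', hΦ', hτss, hΦs]
      ring_nf
    have hRHS : Iic t ∩ Icc (0:ℝ) 1 = Icc 0 t := by
      ext x
      simp only [Set.mem_inter_iff, Set.mem_Iic, Set.mem_Icc]
      exact ⟨fun ⟨ha, hb, _⟩ => ⟨hb, ha⟩, fun ⟨ha, hb⟩ => ⟨hb, ha, hb.trans h1⟩⟩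
    rw [hset, hμset, hμIcc, hRHS, Real.volume_Icc,
      ENNReal.ofReal_mul h0.le, mul_comm (ENNReal.ofReal t) _, ← mul_assoc,
      ENNReal.inv_mul_cancel hΔne ENNReal.ofReal_ne_top, one_mul, sub_zero]
  · -- 1 < t
    have hsub : Icc Vlo Vup ⊆ {x | Φ (Vup / τ) - t * Δ ≤ Φ (x / τ)} := by
      intro x hx
      have hx' : Vlo / τ ≤ x / τ := by gcongr; exact hx.1
      have h1' : Φ (Vlo / τ) ≤ Φ (x / τ) := hΦmono.monotone hx'
      have htΔ : Δ ≤ t * Δ := by nlinarith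
      simp only [Set.mem_setOf_eq]
      linarith [hΔdef.ge, hΔdef.le]
    rw [Set.inter_eq_self_of_subset_left hsub, hμIcc,
      ENNReal.inv_mul_cancel hΔne ENNReal.ofReal_ne_top]
    have hIcc : Iic t ∩ Icc (0:ℝ) 1 = Icc 0 1 :=
      Set.inter_eq_self_of_subset_right (fun x hx => hx.2.trans h1.le)
    rw [hIcc, Real.volume_Icc]
    norm_num
end

section
/- With g(w) = P(E₁ | W = w, E₂) as above and T(y_obs, v, w) = (Φ(V_up(w)/τ) − Φ(vᵀy_obs/τ))/(Φ(V_up(w)/τ) − Φ(V_lo(w)/τ)), if additionally g(w) = Φ(V_up(w)/τ) − Φ(V_lo(w)/τ) for every w, then the marginalized tail probability equals the ratio of integrals [∫ (Φ(V_up(w)/τ) − Φ(vᵀy_obs/τ)) dP_W(w)] / [∫ (Φ(V_up(w)/τ) − Φ(V_lo(w)/τ)) dP_W(w)]. -/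
open MeasureTheory ProbabilityTheory Matrix

/-- If moreover `g(w) = P(E₁ | W = w, E₂) = Φ(V_up(w)/τ) − Φ(V_lo(w)/τ)` and the
conditional tail `T(y_obs, v, w) = (Φ(V_up(w)/τ) − Φ(vᵀy_obs/τ))/(Φ(V_up(w)/τ) − Φ(V_lo(w)/τ))`,
then the marginalized tail probability equals the ratio of integrals
`[∑_w (Φ(V_up(w)/τ) − Φ(vᵀy_obs/τ)) P(W = w)] / [∑_w (Φ(V_up(w)/τ) − Φ(V_lo(w)/τ)) P(W = w)]`. -/
theorem marginalization_ratio {Ω 𝒲 : Type*} [MeasurableSpace Ω] [MeasurableSpace 𝒲]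
    [Countable 𝒲] [MeasurableSingletonClass 𝒲]
    (μ : Measure Ω) [IsProbabilityMeasure μ]
    (n : ℕ) (v yobs : Fin n → ℝ) (Y : Ω → (Fin n → ℝ)) (hY : Measurable Y)
    (W : Ω → 𝒲) (hW : Measurable W)
    (E₁ : Set Ω) (hE₁ : MeasurableSet E₁)
    (E₂ : Set Ω)
    (hE₂ : E₂ = {ω | ∀ i, Y ω i - ((v ⬝ᵥ Y ω) / (v ⬝ᵥ v)) * v i
        = yobs i - ((v ⬝ᵥ yobs) / (v ⬝ᵥ v)) * v i})
    (A : Set Ω) (hA : A = {ω | v ⬝ᵥ yobs ≤ v ⬝ᵥ Y ω})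
    (hpos : ∀ w : 𝒲, 0 < μ (E₁ ∩ E₂ ∩ W ⁻¹' {w}))
    (hindep : ∀ w : 𝒲, μ (W ⁻¹' {w} ∩ E₂) = μ (W ⁻¹' {w}) * μ E₂)
    (τ : ℝ) (hτ : 0 < τ) (Vlo Vup : 𝒲 → ℝ)
    (Φ : ℝ → ℝ) (hΦ : Φ = fun s => cdf (gaussianReal 0 1) s)
    (hg : ∀ w : 𝒲, ((μ[|W ⁻¹' {w} ∩ E₂]) E₁).toReal = Φ (Vup w / τ) - Φ (Vlo w / τ))
    (hT : ∀ w : 𝒲, ((μ[|E₁ ∩ E₂ ∩ W ⁻¹' {w}]) A).toReal =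
      (Φ (Vup w / τ) - Φ ((v ⬝ᵥ yobs) / τ)) / (Φ (Vup w / τ) - Φ (Vlo w / τ))) :
    ((μ[|E₁ ∩ E₂]) A).toReal =
      (∑' w : 𝒲, (Φ (Vup w / τ) - Φ ((v ⬝ᵥ yobs) / τ)) * (μ (W ⁻¹' {w})).toReal) /
      (∑' w : 𝒲, (Φ (Vup w / τ) - Φ (Vlo w / τ)) * (μ (W ⁻¹' {w})).toReal) := by
  classical
  -- Ω and 𝒲 are nonempty
  have hΩ : Nonempty Ω := by
    by_contra h
    rw [not_nonempty_iff] at h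
    have h1 : μ Set.univ = 1 := measure_univ
    rw [Set.univ_eq_empty_iff.2 h] at h1
    simp at h1
  have h𝒲 : Nonempty 𝒲 := ⟨W (Classical.arbitrary Ω)⟩
  -- measurability
  have hfm : ∀ w : 𝒲, MeasurableSet (W ⁻¹' {w}) := fun w => hW (measurableSet_singleton w)
  have hdot : Measurable fun ω => v ⬝ᵥ Y ω := by
    simp only [dotProduct]
    exact Finset.measurable_sum _ fun i _ =>
      measurable_const.mul ((measurable_pi_apply i).comp hY)
  have hAm : MeasurableSet A := by
    rw [hA]; exact measurableSet_le measurable_const hdot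
  have hE₂m : MeasurableSet E₂ := by
    rw [hE₂, Set.setOf_forall]
    refine MeasurableSet.iInter fun i => measurableSet_eq_fun ?_ measurable_const
    exact ((measurable_pi_apply i).comp hY).sub ((hdot.div_const _).mul_const _)
  -- partition lemma
  have hpart : ∀ t : Set Ω, MeasurableSet t → μ t = ∑' w : 𝒲, μ (t ∩ W ⁻¹' {w}) := by
    intro t ht
    have hu : t = ⋃ w : 𝒲, t ∩ W ⁻¹' {w} := by
      ext ω; simp
    have hd : Pairwise (Function.onFun Disjoint fun w : 𝒲 => t ∩ W ⁻¹' {w}) := by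
      intro w w' hne
      refine Set.disjoint_left.2 fun ω hw hw' => hne ?_
      simp only [Set.mem_inter_iff, Set.mem_preimage, Set.mem_singleton_iff] at hw hw'
      rw [← hw.2, ← hw'.2]
    conv_lhs => rw [hu]
    exact measure_iUnion hd fun w => ht.inter (hfm w)
  -- key fact 1
  have key1 : ∀ w : 𝒲, (μ (E₁ ∩ E₂ ∩ W ⁻¹' {w})).toReal =
      (Φ (Vup w / τ) - Φ (Vlo w / τ)) * ((μ (W ⁻¹' {w})).toReal * (μ E₂).toReal) := by
    intro w
    have hm1 : MeasurableSet (W ⁻¹' {w} ∩ E₂) := (hfm w).inter hE₂m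
    have hsub : E₁ ∩ E₂ ∩ W ⁻¹' {w} ⊆ W ⁻¹' {w} ∩ E₂ := by
      intro ω hω
      exact ⟨hω.2, hω.1.2⟩
    have hne0 : μ (W ⁻¹' {w} ∩ E₂) ≠ 0 := by
      intro h0
      have := measure_mono (μ := μ) hsub
      rw [h0] at this
      exact (hpos w).ne' (le_antisymm this zero_le)
    have hpos' : 0 < (μ (W ⁻¹' {w} ∩ E₂)).toReal :=
      ENNReal.toReal_pos hne0 (measure_ne_top μ _)
    have h := hg w
    rw [cond_apply hm1 μ, ENNReal.toReal_mul, ENNReal.toReal_inv, inv_mul_eq_div,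
      div_eq_iff hpos'.ne'] at h
    have hset : W ⁻¹' {w} ∩ E₂ ∩ E₁ = E₁ ∩ E₂ ∩ W ⁻¹' {w} := by
      ext ω; simp only [Set.mem_inter_iff]; tauto
    rw [hset, hindep w, ENNReal.toReal_mul] at h
    exact h
  -- key fact 2
  have key2 : ∀ w : 𝒲, (μ (E₁ ∩ E₂ ∩ W ⁻¹' {w} ∩ A)).toReal =
      (Φ (Vup w / τ) - Φ ((v ⬝ᵥ yobs) / τ)) * ((μ (W ⁻¹' {w})).toReal * (μ E₂).toReal) := by
    intro w
    have hsm : MeasurableSet (E₁ ∩ E₂ ∩ W ⁻¹' {w}) := (hE₁.inter hE₂m).inter (hfm w)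
    have hspos : 0 < (μ (E₁ ∩ E₂ ∩ W ⁻¹' {w})).toReal :=
      ENNReal.toReal_pos (hpos w).ne' (measure_ne_top μ _)
    have h := hT w
    rw [cond_apply hsm μ, ENNReal.toReal_mul, ENNReal.toReal_inv, inv_mul_eq_div,
      div_eq_iff hspos.ne'] at h
    have hb : Φ (Vup w / τ) - Φ (Vlo w / τ) ≠ 0 := by
      intro h0
      rw [key1 w, h0, zero_mul] at hspos
      exact lt_irrefl _ hspos
    rw [key1 w] at h
    rw [h]
    field_simp
  -- positivity of μ E₂ and μ (E₁ ∩ E₂)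
  have hE₂pos : 0 < (μ E₂).toReal := by
    obtain ⟨w₀⟩ := h𝒲
    have hsub : E₁ ∩ E₂ ∩ W ⁻¹' {w₀} ⊆ E₂ := fun ω hω => hω.1.2
    exact ENNReal.toReal_pos ((hpos w₀).trans_le (measure_mono hsub)).ne' (measure_ne_top μ _)
  -- sums
  have hμsA : (μ (E₁ ∩ E₂ ∩ A)).toReal =
      (∑' w : 𝒲, (Φ (Vup w / τ) - Φ ((v ⬝ᵥ yobs) / τ)) * (μ (W ⁻¹' {w})).toReal)
        * (μ E₂).toReal := by
    rw [hpart _ ((hE₁.inter hE₂m).inter hAm),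
      ENNReal.tsum_toReal_eq (fun w => measure_ne_top μ _), ← tsum_mul_right]
    refine tsum_congr fun w => ?_
    have hset : E₁ ∩ E₂ ∩ A ∩ W ⁻¹' {w} = E₁ ∩ E₂ ∩ W ⁻¹' {w} ∩ A := by
      ext ω; simp only [Set.mem_inter_iff]; tauto
    rw [hset, key2 w]
    ring
  have hμs : (μ (E₁ ∩ E₂)).toReal =
      (∑' w : 𝒲, (Φ (Vup w / τ) - Φ (Vlo w / τ)) * (μ (W ⁻¹' {w})).toReal)
        * (μ E₂).toReal := by
    rw [hpart _ (hE₁.inter hE₂m),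
      ENNReal.tsum_toReal_eq (fun w => measure_ne_top μ _), ← tsum_mul_right]
    refine tsum_congr fun w => ?_
    rw [key1 w]
    ring
  rw [cond_apply (hE₁.inter hE₂m) μ, ENNReal.toReal_mul, ENNReal.toReal_inv, inv_mul_eq_div,
    hμsA, hμs, mul_div_mul_right _ _ hE₂pos.ne']
end
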